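/- The Frucht graph is asymmetric: its automorphism group is trivial. -/

import Mathlib

/-- Edge list of the Frucht graph: a 12-cycle with six chords. -/
def fruchtEdges : List (Fin 12 × Fin 12) :=
  [(0,1),(1,2),(2,3),(3,4),(4,5),(5,6),(6,7),(7,8),(8,9),(9,10),(10,11),(11,0),
   (0,4),(1,7),(2,9),(3,6),(5,11),(8,10)]

/-- The Frucht graph. -/
def frucht : SimpleGraph (Fin 12) where
  Adj x y := x ≠ y ∧ ((x, y) ∈ fruchtEdges ∨ (y, x) ∈ fruchtEdges)
  symm := ⟨fun _ _ h => ⟨h.1.symm, h.2.symm⟩⟩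
  loopless := ⟨fun _ h => h.1 rfl⟩

/-!
An automorphism maps triangles to triangles, so it preserves the number of walks of length 3
ending in the unique triangle `{8, 9, 10}`. Among these counts, `5` is attained only at `1` and
`7` only at `11`, so both vertices are fixed. Every other vertex is then the unique common
neighbour of two fixed vertices, the unique neighbour of `11` in the triangle, or the third
neighbour of a fixed vertex whose other two neighbours are fixed; hence it is fixed too.
-/

theorem Function.apply_eq_self_of_unique {α : Type*} {f : α → α} {p : α → Prop}
    (hp : ∀ x, p (f x) ↔ p x) {w : α} (hw : ∀ x, p x ↔ x = w) : f w = w :=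
  (hw (f w)).1 ((hp w).2 ((hw w).2 rfl))

namespace SimpleGraph

variable {V W : Type*} {G : SimpleGraph V} {H : SimpleGraph W}

def InTriangle (G : SimpleGraph V) (v : V) : Prop :=
  ∃ a b, G.Adj v a ∧ G.Adj v b ∧ G.Adj a b

theorem InTriangle.map (f : G →g H) {v : V} : G.InTriangle v → H.InTriangle (f v)
  | ⟨a, b, hva, hvb, hab⟩ => ⟨f a, f b, f.map_adj hva, f.map_adj hvb, f.map_adj hab⟩

theorem Iso.inTriangle_apply_iff (f : G ≃g H) (v : V) : H.InTriangle (f v) ↔ G.InTriangle v :=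
  ⟨fun h => by simpa using h.map f.symm.toHom, InTriangle.map f.toHom⟩

section LocallyFinite

variable [G.LocallyFinite] [H.LocallyFinite]

def walkCountInto (G : SimpleGraph V) [G.LocallyFinite] (p : V → Prop) [DecidablePred p] :
    ℕ → V → ℕ
  | 0, v => if p v then 1 else 0
  | n + 1, v => ∑ u ∈ G.neighborFinset v, G.walkCountInto p n u

theorem Iso.walkCountInto_apply (f : G ≃g H) {p : V → Prop} {q : W → Prop} [DecidablePred p]
    [DecidablePred q] (hpq : ∀ v, q (f v) ↔ p v) (n : ℕ) (v : V) :
    H.walkCountInto q n (f v) = G.walkCountInto p n v := by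
  induction n generalizing v with
  | zero => simp [walkCountInto, hpq]
  | succ n ih =>
    refine (Finset.sum_equiv f.toEquiv (fun u => ?_) fun u _ => (ih u).symm).symm
    simp [f.map_adj_iff]

end LocallyFinite

namespace Iso

variable (f : G ≃g G)

theorem adj_apply_iff_of_apply_eq {a : V} (ha : f a = a) (x : V) :
    G.Adj a (f x) ↔ G.Adj a x := by
  conv_lhs => rw [← ha]
  exact f.map_adj_iff

theorem apply_eq_self_of_unique_adj {a w : V} (ha : f a = a) {q : V → Prop}
    (hq : ∀ x, q (f x) ↔ q x) (hw : ∀ x, G.Adj a x ∧ q x ↔ x = w) : f w = w :=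
  Function.apply_eq_self_of_unique (f := f)
    (fun x => and_congr (f.adj_apply_iff_of_apply_eq ha x) (hq x)) hw

theorem apply_eq_self_of_unique_common_adj {a b w : V} (ha : f a = a) (hb : f b = b)
    (hw : ∀ x, G.Adj a x ∧ G.Adj b x ↔ x = w) : f w = w :=
  f.apply_eq_self_of_unique_adj ha (f.adj_apply_iff_of_apply_eq hb) hw

theorem apply_eq_self_of_unique_other_adj {a b c w : V} (ha : f a = a) (hb : f b = b)
    (hc : f c = c) (hw : ∀ x, G.Adj a x ∧ x ≠ b ∧ x ≠ c ↔ x = w) : f w = w :=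
  f.apply_eq_self_of_unique_adj ha
    (fun x => by rw [← hb, ← hc, f.injective.ne_iff, f.injective.ne_iff, hb, hc]) hw

theorem apply_eq_self_of_walkCountInto [G.LocallyFinite] {p : V → Prop} [DecidablePred p]
    (hp : ∀ x, p (f x) ↔ p x) (n m : ℕ) {w : V}
    (hw : ∀ x, G.walkCountInto p n x = m ↔ x = w) : f w = w :=
  Function.apply_eq_self_of_unique (f := f) (fun x => by rw [f.walkCountInto_apply hp]) hw

end Iso

end SimpleGraph

open SimpleGraph

instance : DecidableRel frucht.Adj := fun x y =>
  decidable_of_iff (x ≠ y ∧ ((x, y) ∈ fruchtEdges ∨ (y, x) ∈ fruchtEdges)) Iff.rfl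

theorem frucht_inTriangle_iff (v : Fin 12) :
    frucht.InTriangle v ↔ v ∈ ({8, 9, 10} : Finset (Fin 12)) := by
  revert v
  unfold InTriangle
  decide

instance : DecidablePred frucht.InTriangle := fun v =>
  decidable_of_iff' _ (frucht_inTriangle_iff v)

def fruchtNeighbors (v : Fin 12) : Finset (Fin 12) :=
  (fruchtEdges.filterMap fun e =>
    if e.1 = v then some e.2 else if e.2 = v then some e.1 else none).toFinset

theorem mem_fruchtNeighbors : ∀ v w, w ∈ fruchtNeighbors v ↔ frucht.Adj v w := by
  decide

-- The default instance filters `Finset.univ` by adjacency, which is far slower to evaluate in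
-- the kernel.
instance (v : Fin 12) : Fintype (frucht.neighborSet v) :=
  Fintype.ofFinset (fruchtNeighbors v) (mem_fruchtNeighbors v)

/-- The Frucht graph is asymmetric: its automorphism group is trivial. -/
theorem stmt_11 : ∀ (f : frucht ≃g frucht) (v : Fin 12), f v = v := by
  intro f v
  have h1 : f 1 = 1 :=
    f.apply_eq_self_of_walkCountInto f.inTriangle_apply_iff 3 5 (by decide +kernel)
  have h11 : f 11 = 11 :=
    f.apply_eq_self_of_walkCountInto f.inTriangle_apply_iff 3 7 (by decide +kernel)
  have h0 : f 0 = 0 := f.apply_eq_self_of_unique_common_adj h1 h11 (by decide)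
  have h10 : f 10 = 10 := f.apply_eq_self_of_unique_adj h11 f.inTriangle_apply_iff (by decide)
  have h5 : f 5 = 5 := f.apply_eq_self_of_unique_other_adj h11 h0 h10 (by decide)
  have h4 : f 4 = 4 := f.apply_eq_self_of_unique_other_adj h0 h1 h11 (by decide)
  have h3 : f 3 = 3 := f.apply_eq_self_of_unique_other_adj h4 h0 h5 (by decide)
  have h6 : f 6 = 6 := f.apply_eq_self_of_unique_other_adj h5 h4 h11 (by decide)
  have h7 : f 7 = 7 := f.apply_eq_self_of_unique_other_adj h6 h3 h5 (by decide)
  have h2 : f 2 = 2 := f.apply_eq_self_of_unique_other_adj h1 h0 h7 (by decide)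
  have h8 : f 8 = 8 := f.apply_eq_self_of_unique_other_adj h7 h1 h6 (by decide)
  have h9 : f 9 = 9 := f.apply_eq_self_of_unique_other_adj h2 h1 h3 (by decide)
  fin_cases v <;> assumption
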